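/- The ℝ-subalgebra of M₄(ℂ) generated by the set {γ(v)·γ(w) : v, w ∈ M₂(ℂ) Hermitian} equals the set of all block-diagonal matrices fromBlocks K 0 0 (K‡) with K ∈ M₂(ℂ). (This is the even part D⁽⁺⁾ of the Dirac algebra.) -/

import Mathlib

/-!
For Hermitian `v, w` one computes `γ(v)·γ(w) = Φ(2·v·adj w)` with `Φ K = fromBlocks K 0 0 K‡`:
the lower block `2·adj v·w` is `(2·v·adj w)‡` because `adj` and `ᴴ` are both
anti-multiplicative and `adj ∘ adj = id` in dimension two. Since `‡` is multiplicative and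
`ℝ`-linear, `Φ` is an `ℝ`-algebra map, so the algebra generated by the products is the image
of the algebra generated by the `2·v·adj w`. That one is all of `M₂(ℂ)`: it contains every
Hermitian `v` (take `w = 1`) and `i·1 = -σ₂·adj σ₃·σ₁`, hence every `K = ℜK + i·ℑK`.
-/

open Matrix

/-- The space of 2×2 complex matrices. -/
abbrev M2 : Type := Matrix (Fin 2) (Fin 2) ℂ

/-- The space of 4×4 complex matrices, indexed by blocks (endomorphisms of 4-spinor space). -/
abbrev M4 : Type := Matrix (Fin 2 ⊕ Fin 2) (Fin 2 ⊕ Fin 2) ℂ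

/-- The Dirac map in two-spinor (Weyl) form: `γ(y) = fromBlocks 0 (√2·y) (√2·adj y) 0`. -/
noncomputable def diracGamma (y : M2) : M4 :=
  fromBlocks 0 ((Real.sqrt 2 : ℂ) • y) ((Real.sqrt 2 : ℂ) • y.adjugate) 0

/-- The ε-adjoint `X‡ := adj(Xᴴ)`. -/
def ddag (X : M2) : M2 := (Xᴴ).adjugate

theorem Matrix.adjugate_add_fin_two {α : Type*} [CommRing α] (A B : Matrix (Fin 2) (Fin 2) α) :
    adjugate (A + B) = adjugate A + adjugate B := by
  ext i j
  fin_cases i <;> fin_cases j <;> simp [adjugate_fin_two, add_comm]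

theorem Matrix.adjugate_adjugate_fin_two {α : Type*} [CommRing α]
    (A : Matrix (Fin 2) (Fin 2) α) :
    adjugate (adjugate A) = A := by
  simp [adjugate_adjugate]

lemma ddag_one : ddag 1 = 1 := by
  simp [ddag]

lemma ddag_add (K L : M2) : ddag (K + L) = ddag K + ddag L := by
  simp [ddag, adjugate_add_fin_two]

lemma ddag_mul (K L : M2) : ddag (K * L) = ddag K * ddag L := by
  simp [ddag, adjugate_mul_distrib]

lemma ddag_smul (r : ℝ) (K : M2) : ddag (r • K) = r • ddag K := by
  rw [ddag, ddag, conjTranspose_smul, star_trivial, ← Complex.coe_smul, adjugate_smul]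
  simp

noncomputable def blockDiagDdag : M2 →ₐ[ℝ] M4 :=
  AlgHom.ofLinearMap
    { toFun K := fromBlocks K 0 0 (ddag K)
      map_add' K L := by simp [ddag_add, fromBlocks_add]
      map_smul' r K := by simp [ddag_smul, fromBlocks_smul] }
    (by simp [ddag_one])
    (fun K L => by simp [ddag_mul, fromBlocks_multiply])

@[simp]
lemma blockDiagDdag_apply (K : M2) : blockDiagDdag K = fromBlocks K 0 0 (ddag K) := rfl

lemma diracGamma_mul_diracGamma (v w : M2) :
    diracGamma v * diracGamma w
      = fromBlocks ((2 : ℂ) • (v * w.adjugate)) 0 0 ((2 : ℂ) • (v.adjugate * w)) := by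
  have hsqrt : (Real.sqrt 2 : ℂ) * Real.sqrt 2 = 2 := by
    rw [← Complex.ofReal_mul, Real.mul_self_sqrt zero_le_two, Complex.ofReal_ofNat]
  simp only [diracGamma, fromBlocks_multiply, Matrix.smul_mul, Matrix.mul_smul, smul_smul, hsqrt]
  simp

lemma ddag_two_smul_mul_adjugate {v w : M2} (hv : v.IsHermitian) (hw : w.IsHermitian) :
    ddag ((2 : ℂ) • (v * w.adjugate)) = (2 : ℂ) • (v.adjugate * w) := by
  simp [ddag, conjTranspose_mul, ← adjugate_conjTranspose, hv.eq, hw.eq, adjugate_smul,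
    adjugate_mul_distrib, adjugate_adjugate_fin_two]

lemma diracGamma_mul_diracGamma_of_isHermitian {v w : M2} (hv : v.IsHermitian)
    (hw : w.IsHermitian) :
    diracGamma v * diracGamma w = blockDiagDdag ((2 : ℂ) • (v * w.adjugate)) := by
  rw [diracGamma_mul_diracGamma, blockDiagDdag_apply, ddag_two_smul_mul_adjugate hv hw]

section HermitianProducts

variable {S : Subalgebra ℝ M2}
  (hS : ∀ v w : M2, v.IsHermitian → w.IsHermitian → (2 : ℂ) • (v * w.adjugate) ∈ S)
include hS

lemma mul_adjugate_mem_of_isHermitian {v w : M2} (hv : v.IsHermitian) (hw : w.IsHermitian) :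
    v * w.adjugate ∈ S := by
  have h := S.smul_mem (hS v w hv hw) (2⁻¹ : ℝ)
  rwa [← Complex.coe_smul, smul_smul, Complex.ofReal_inv, Complex.ofReal_ofNat,
    inv_mul_cancel₀ two_ne_zero, one_smul] at h

lemma mem_of_isHermitian {v : M2} (hv : v.IsHermitian) : v ∈ S := by
  simpa using mul_adjugate_mem_of_isHermitian hS hv isHermitian_one

lemma I_smul_one_mem : Complex.I • (1 : M2) ∈ S := by
  let σ₁ : M2 := !![0, 1; 1, 0]
  let σ₂ : M2 := !![0, -Complex.I; Complex.I, 0]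
  let σ₃ : M2 := !![1, 0; 0, -1]
  have hσ₁ : σ₁.IsHermitian := by ext i j; fin_cases i <;> fin_cases j <;> simp [σ₁]
  have hσ₂ : σ₂.IsHermitian := by ext i j; fin_cases i <;> fin_cases j <;> simp [σ₂]
  have hσ₃ : σ₃.IsHermitian := by ext i j; fin_cases i <;> fin_cases j <;> simp [σ₃]
  have hI : Complex.I • (1 : M2) = -(σ₂ * σ₃.adjugate * σ₁) := by
    ext i j
    fin_cases i <;> fin_cases j <;> simp [σ₁, σ₂, σ₃, adjugate_fin_two]
  rw [hI]
  exact S.neg_mem <|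
    S.mul_mem (mul_adjugate_mem_of_isHermitian hS hσ₂ hσ₃) (mem_of_isHermitian hS hσ₁)

open ComplexStarModule in
lemma eq_top_of_two_smul_mul_adjugate_mem : S = ⊤ := by
  refine eq_top_iff.2 fun K _ => ?_
  rw [← realPart_add_I_smul_imaginaryPart K, ← smul_one_mul]
  exact S.add_mem (mem_of_isHermitian hS (ℜ K).2.isHermitian)
    (S.mul_mem (I_smul_one_mem hS) (mem_of_isHermitian hS (ℑ K).2.isHermitian))

end HermitianProducts

/-- The even part `D⁽⁺⁾` of the Dirac algebra: the ℝ-subalgebra of `M₄(ℂ)` generated by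
the products `γ(v)·γ(w)` with `v, w` Hermitian equals the set of block-diagonal matrices
`fromBlocks K 0 0 (K‡)`, `K ∈ M₂(ℂ)`. -/
theorem even_dirac_algebra_characterization :
    ((Algebra.adjoin ℝ
        {m : M4 | ∃ v w : M2, v.IsHermitian ∧ w.IsHermitian ∧
          m = diracGamma v * diracGamma w} : Subalgebra ℝ M4) : Set M4)
      = {Φ : M4 | ∃ K : M2, Φ = fromBlocks K 0 0 (ddag K)} := by
  set P : Set M2 := {K | ∃ v w : M2, v.IsHermitian ∧ w.IsHermitian ∧
    K = (2 : ℂ) • (v * w.adjugate)}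
  have hgen : {m : M4 | ∃ v w : M2, v.IsHermitian ∧ w.IsHermitian ∧
      m = diracGamma v * diracGamma w} = blockDiagDdag '' P := by
    ext m
    constructor
    · rintro ⟨v, w, hv, hw, rfl⟩
      exact ⟨_, ⟨v, w, hv, hw, rfl⟩, (diracGamma_mul_diracGamma_of_isHermitian hv hw).symm⟩
    · rintro ⟨_, ⟨v, w, hv, hw, rfl⟩, rfl⟩
      exact ⟨v, w, hv, hw, (diracGamma_mul_diracGamma_of_isHermitian hv hw).symm⟩
  have htop : Algebra.adjoin ℝ P = ⊤ :=
    eq_top_of_two_smul_mul_adjugate_mem fun v w hv hw =>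
      Algebra.subset_adjoin ⟨v, w, hv, hw, rfl⟩
  rw [hgen, Algebra.adjoin_image, htop, Algebra.map_top, AlgHom.coe_range]
  ext Φ
  simp [eq_comm]
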